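/- In the comparison principle setting, let w = e^{−λτ}(y⁺ − y⁻) + α for α > 0, and suppose (φ₀, τ₀) is a first interior zero of w, so that y⁺ = y⁻ − αe^{λτ₀}, y⁺_φ = y⁻_φ, y⁺_{φφ} ≥ y⁻_{φφ}, and w_τ(φ₀,τ₀) ≤ 0. If y⁺ is a supersolution, y⁻ a subsolution of ∂_τ y = ℰ[y], then e^{λτ₀}·w_τ(φ₀,τ₀) ≥ y⁻·(y⁺_{φφ} − y⁻_{φφ}) + αe^{λτ₀}·(λ − y⁺_{φφ} − 1 + (y⁺ + y⁻)/φ₀²). In particular, if y⁺_{φφ} < C, y⁻ ≥ 0, y⁺ + y⁻ ≥ 0, and λ > C + 1, this yields the contradiction 0 ≥ w_τ(φ₀,τ₀) > 0. -/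

import Mathlib

noncomputable def yP (y : ℝ → ℝ → ℝ) (x t : ℝ) : ℝ := deriv (fun s => y s t) x
noncomputable def yPP (y : ℝ → ℝ → ℝ) (x t : ℝ) : ℝ := deriv (fun s => yP y s t) x
noncomputable def yT (y : ℝ → ℝ → ℝ) (x t : ℝ) : ℝ := deriv (fun s => y x s) t
noncomputable def Eop2 (y : ℝ → ℝ → ℝ) (x t : ℝ) : ℝ :=
  y x t * yPP y x t + (2 - x - yP y x t) * yP y x t + y x t * (1 - y x t / x ^ 2)

theorem stmt13 (ym yp : ℝ → ℝ → ℝ)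
    (hym : ContDiff ℝ (⊤ : ℕ∞) (Function.uncurry ym))
    (hyp : ContDiff ℝ (⊤ : ℕ∞) (Function.uncurry yp))
    (lam α C φ₀ τ₀ : ℝ) (hlam : 0 < lam) (hα : 0 < α) (hC : 0 < C) (hφ₀ : 0 < φ₀)
    (w : ℝ → ℝ → ℝ)
    (hw : ∀ x t : ℝ, w x t = Real.exp (-lam * t) * (yp x t - ym x t) + α)
    (h1 : yp φ₀ τ₀ = ym φ₀ τ₀ - α * Real.exp (lam * τ₀))
    (h2 : yP yp φ₀ τ₀ = yP ym φ₀ τ₀)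
    (h3 : yPP ym φ₀ τ₀ ≤ yPP yp φ₀ τ₀)
    (h4 : deriv (fun s => w φ₀ s) τ₀ ≤ 0)
    (hsup : Eop2 yp φ₀ τ₀ ≤ yT yp φ₀ τ₀)
    (hsub : yT ym φ₀ τ₀ ≤ Eop2 ym φ₀ τ₀) :
    (ym φ₀ τ₀ * (yPP yp φ₀ τ₀ - yPP ym φ₀ τ₀)
        + α * Real.exp (lam * τ₀)
          * (lam - yPP yp φ₀ τ₀ - 1 + (yp φ₀ τ₀ + ym φ₀ τ₀) / φ₀ ^ 2)
      ≤ Real.exp (lam * τ₀) * deriv (fun s => w φ₀ s) τ₀) ∧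
    (yPP yp φ₀ τ₀ < C → 0 ≤ ym φ₀ τ₀ → 0 ≤ yp φ₀ τ₀ + ym φ₀ τ₀ →
      C + 1 < lam → False) := by
  have hdp : DifferentiableAt ℝ (fun s => yp φ₀ s) τ₀ := by
    have := ((hyp.differentiable (by simp)).comp
      ((differentiable_const φ₀).prodMk differentiable_id)).differentiableAt (x := τ₀)
    exact this
  have hdm : DifferentiableAt ℝ (fun s => ym φ₀ s) τ₀ := by
    have := ((hym.differentiable (by simp)).comp
      ((differentiable_const φ₀).prodMk differentiable_id)).differentiableAt (x := τ₀)
    exact this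
  have hTp : HasDerivAt (fun s => yp φ₀ s) (yT yp φ₀ τ₀) τ₀ := hdp.hasDerivAt
  have hTm : HasDerivAt (fun s => ym φ₀ s) (yT ym φ₀ τ₀) τ₀ := hdm.hasDerivAt
  have hE : HasDerivAt (fun s : ℝ => Real.exp (-lam * s))
      (Real.exp (-lam * τ₀) * (-lam)) τ₀ := by
    have h := ((hasDerivAt_id τ₀).const_mul (-lam)).exp
    simpa [mul_comm] using h
  have hW : HasDerivAt (fun s => w φ₀ s)
      (Real.exp (-lam * τ₀) * (-lam) * (yp φ₀ τ₀ - ym φ₀ τ₀)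
        + Real.exp (-lam * τ₀) * (yT yp φ₀ τ₀ - yT ym φ₀ τ₀)) τ₀ := by
    have h := (hE.mul (hTp.sub hTm)).add_const α
    have heq : (fun s => w φ₀ s)
        = fun s => Real.exp (-lam * s) * (yp φ₀ s - ym φ₀ s) + α := by
      funext s; exact hw φ₀ s
    rw [heq]; exact h
  have hwd : deriv (fun s => w φ₀ s) τ₀
      = Real.exp (-lam * τ₀) * (-lam) * (yp φ₀ τ₀ - ym φ₀ τ₀)
        + Real.exp (-lam * τ₀) * (yT yp φ₀ τ₀ - yT ym φ₀ τ₀) := hW.deriv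
  have hee : Real.exp (lam * τ₀) * Real.exp (-lam * τ₀) = 1 := by
    rw [← Real.exp_add]; ring_nf; exact Real.exp_zero
  have hepos : 0 < Real.exp (lam * τ₀) := Real.exp_pos _
  have hφ2 : (0:ℝ) < φ₀ ^ 2 := by positivity
  have hdiff : Eop2 yp φ₀ τ₀ - Eop2 ym φ₀ τ₀
      = ym φ₀ τ₀ * (yPP yp φ₀ τ₀ - yPP ym φ₀ τ₀)
        + α * Real.exp (lam * τ₀)
          * (- yPP yp φ₀ τ₀ - 1 + (yp φ₀ τ₀ + ym φ₀ τ₀) / φ₀ ^ 2) := by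
    simp only [Eop2, h2]
    rw [h1]
    field_simp
    ring
  have hmain : ym φ₀ τ₀ * (yPP yp φ₀ τ₀ - yPP ym φ₀ τ₀)
      + α * Real.exp (lam * τ₀)
        * (lam - yPP yp φ₀ τ₀ - 1 + (yp φ₀ τ₀ + ym φ₀ τ₀) / φ₀ ^ 2)
      ≤ Real.exp (lam * τ₀) * deriv (fun s => w φ₀ s) τ₀ := by
    have h5 : Eop2 yp φ₀ τ₀ - Eop2 ym φ₀ τ₀ ≤ yT yp φ₀ τ₀ - yT ym φ₀ τ₀ := by linarith
    rw [hdiff] at h5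
    rw [h1] at h5
    rw [hwd, h1]
    have hrhs : Real.exp (lam * τ₀) *
        (Real.exp (-lam * τ₀) * -lam * (ym φ₀ τ₀ - α * Real.exp (lam * τ₀) - ym φ₀ τ₀)
          + Real.exp (-lam * τ₀) * (yT yp φ₀ τ₀ - yT ym φ₀ τ₀))
        = lam * (α * Real.exp (lam * τ₀)) + (yT yp φ₀ τ₀ - yT ym φ₀ τ₀) := by
      linear_combination (lam * α * Real.exp (lam * τ₀)
        + (yT yp φ₀ τ₀ - yT ym φ₀ τ₀)) * hee
    rw [hrhs]
    linarith
  refine ⟨hmain, fun hA hm hpm hl => ?_⟩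
  have hle : Real.exp (lam * τ₀) * deriv (fun s => w φ₀ s) τ₀ ≤ 0 :=
    mul_nonpos_of_nonneg_of_nonpos hepos.le h4
  have hq : 0 ≤ (yp φ₀ τ₀ + ym φ₀ τ₀) / φ₀ ^ 2 := div_nonneg hpm hφ2.le
  nlinarith [mul_pos hα hepos, mul_nonneg hm (sub_nonneg.mpr h3),
    mul_pos (mul_pos hα hepos) (by linarith : (0:ℝ) < lam - yPP yp φ₀ τ₀ - 1),
    mul_nonneg (mul_nonneg hα.le hepos.le) hq]
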